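/- Let F₁ = (1 + E(−4) + E(−6) + E(−8))·(1 − E(−6))·(1 − E(−4))·(1 − E(12)) and F₂ = (1 + E(−2) + E(−4) + E(−6))·(1 − E(−2))·(1 − E(−10))·(1 − E(10)) in ℚ[[λ]]. Then 2 · 21 · ( c₅(F₁)/((−12)·48) + c₅(F₂)/((−10)·(−40)) ) = −28. (This is the equivariant localization computation of the descendent invariant ⟨τ₂(1)⟩₄ = −28 of the local Calabi–Yau 4-fold over the Mukai–Umemura threefold in curve class 4[line]; in particular ⟨τ₂(h₀)⟩₄ / ⟨τ₀(h₂)⟩₄ = −1/6.) -/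

import Mathlib

/-!
Each factor of `F₁` and `F₂` is a `ℤ`-combination of exponentials `E a`, and
`E a * E b = E (a + b)`, so the products are again `ℤ`-combinations `∑ nₐ E a`, whose
coefficients are `c k (∑ nₐ E a) = (∑ nₐ aᵏ) / k!`. What remains is integer arithmetic.
-/

/-- `E a` is the exponential power series `∑ aⁿ λⁿ / n!` in `ℚ[[λ]]`. -/
noncomputable def E (a : ℤ) : PowerSeries ℚ :=
  PowerSeries.mk fun n => (a : ℚ) ^ n / n.factorial

/-- `c k F` is the coefficient of `λ^k` in `F ∈ ℚ[[λ]]`. -/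
noncomputable def c (k : ℕ) (F : PowerSeries ℚ) : ℚ := PowerSeries.coeff k F

open PowerSeries

theorem E_eq_rescale_exp (a : ℤ) : E a = rescale (a : ℚ) (exp ℚ) := by
  ext n
  simp [E, coeff_rescale, coeff_exp, div_eq_mul_inv]

theorem E_zero : E 0 = 1 := by
  rw [E_eq_rescale_exp, Int.cast_zero, rescale_zero, RingHom.comp_apply, constantCoeff_exp,
    map_one]

theorem E_mul_E (a b : ℤ) : E a * E b = E (a + b) := by
  simp only [E_eq_rescale_exp, exp_mul_exp_eq_exp_add, Int.cast_add]

theorem c_E (k : ℕ) (a : ℤ) : c k (E a) = (a : ℚ) ^ k / k.factorial := coeff_mk _ _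

/-- The list `[(n₁, a₁), …, (nᵣ, aᵣ)]` encodes the Laurent polynomial `∑ nᵢ T^aᵢ`, and `expComb`
evaluates it at `T = e^λ`. -/
noncomputable def expComb (l : List (ℤ × ℤ)) : ℚ⟦X⟧ := (l.map fun p => p.1 • E p.2).sum

def combMul (l₁ l₂ : List (ℤ × ℤ)) : List (ℤ × ℤ) :=
  l₁.flatMap fun p => l₂.map fun q => (p.1 * q.1, p.2 + q.2)

def powerSum (k : ℕ) (l : List (ℤ × ℤ)) : ℤ := (l.map fun p => p.1 * p.2 ^ k).sum

theorem expComb_cons (p : ℤ × ℤ) (l : List (ℤ × ℤ)) :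
    expComb (p :: l) = p.1 • E p.2 + expComb l := List.sum_cons

theorem expComb_append (l₁ l₂ : List (ℤ × ℤ)) :
    expComb (l₁ ++ l₂) = expComb l₁ + expComb l₂ := by
  rw [expComb, List.map_append, List.sum_append, expComb, expComb]

theorem E_eq_expComb (a : ℤ) : E a = expComb [(1, a)] := by
  simp [expComb]

theorem one_eq_expComb : (1 : ℚ⟦X⟧) = expComb [(1, 0)] := by
  rw [← E_zero, E_eq_expComb]

theorem neg_expComb (l : List (ℤ × ℤ)) : -expComb l = expComb (l.map fun q => (-q.1, q.2)) := by
  induction l with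
  | nil => simp [expComb]
  | cons p l ih => rw [expComb_cons, neg_add, ih, List.map_cons, expComb_cons, neg_smul]

theorem expComb_sub (l₁ l₂ : List (ℤ × ℤ)) :
    expComb l₁ - expComb l₂ = expComb (l₁ ++ l₂.map fun q => (-q.1, q.2)) := by
  rw [sub_eq_add_neg, neg_expComb, expComb_append]

theorem smul_E_mul_expComb (p : ℤ × ℤ) (l : List (ℤ × ℤ)) :
    p.1 • E p.2 * expComb l = expComb (l.map fun q => (p.1 * q.1, p.2 + q.2)) := by
  rw [expComb, ← List.sum_map_mul_left, expComb, List.map_map]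
  congr 1
  refine List.map_congr_left fun q _ => ?_
  rw [Function.comp_apply, smul_mul_smul_comm, E_mul_E, mul_smul]

theorem combMul_cons (p : ℤ × ℤ) (l₁ l₂ : List (ℤ × ℤ)) :
    combMul (p :: l₁) l₂ = l₂.map (fun q => (p.1 * q.1, p.2 + q.2)) ++ combMul l₁ l₂ :=
  List.flatMap_cons

theorem expComb_mul (l₁ l₂ : List (ℤ × ℤ)) :
    expComb l₁ * expComb l₂ = expComb (combMul l₁ l₂) := by
  induction l₁ with
  | nil => simp [expComb, combMul]
  | cons p l ih =>
    rw [expComb_cons, add_mul, ih, smul_E_mul_expComb, combMul_cons, expComb_append]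

theorem c_expComb (k : ℕ) (l : List (ℤ × ℤ)) :
    c k (expComb l) = powerSum k l / k.factorial := by
  induction l with
  | nil => simp [expComb, powerSum, c]
  | cons p l ih =>
    unfold powerSum at ih ⊢
    rw [expComb_cons, c, map_add, map_zsmul, ← c, ← c, ih, c_E, List.map_cons, List.sum_cons]
    push_cast
    ring

/-- Equivariant localization computation of the descendent invariant
`⟨τ₂(1)⟩₄ = −28` of the local Calabi–Yau 4-fold over the Mukai–Umemura threefold
in curve class `4[line]`. -/
theorem stmt_12 :
    let F₁ : PowerSeries ℚ :=
      (1 + E (-4) + E (-6) + E (-8)) * (1 - E (-6)) * (1 - E (-4)) * (1 - E 12)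
    let F₂ : PowerSeries ℚ :=
      (1 + E (-2) + E (-4) + E (-6)) * (1 - E (-2)) * (1 - E (-10)) * (1 - E 10)
    2 * 21 * (c 5 F₁ / ((-12) * 48) + c 5 F₂ / ((-10) * (-40))) = (-28 : ℚ) := by
  intro F₁ F₂
  have hF₁ : F₁ = expComb (combMul (combMul (combMul [(1, 0), (1, -4), (1, -6), (1, -8)]
      [(1, 0), (-1, -6)]) [(1, 0), (-1, -4)]) [(1, 0), (-1, 12)]) := by
    simp only [F₁, E_eq_expComb, one_eq_expComb, ← expComb_append, expComb_sub, expComb_mul]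
    rfl
  have hF₂ : F₂ = expComb (combMul (combMul (combMul [(1, 0), (1, -2), (1, -4), (1, -6)]
      [(1, 0), (-1, -2)]) [(1, 0), (-1, -10)]) [(1, 0), (-1, 10)]) := by
    simp only [F₂, E_eq_expComb, one_eq_expComb, ← expComb_append, expComb_sub, expComb_mul]
    rfl
  have hc₁ : c 5 F₁ = -21504 := by
    rw [hF₁, c_expComb]
    norm_num [powerSum, combMul]
  have hc₂ : c 5 F₂ = -15200 := by
    rw [hF₂, c_expComb]
    norm_num [powerSum, combMul]
  rw [hc₁, hc₂]
  norm_num
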